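/- arXiv:2509.13851 — 2 statements merged into one kernel-verified Lean document; each statement's English description precedes it below -/
import Mathlib

section
/- Let (u^k, x^k, y^k), k ≥ 1, be the sequence generated by the T-ADMM algorithm with penalty parameter ρ ≥ 2. Then the successive differences vanish: ‖u^k − u^{k+1}‖₂² → 0, ‖x^k − x^{k+1}‖₂² → 0, and ‖y^k − y^{k+1}‖₂² → 0 as k → ∞. -/
/-!
Let `xs` be the projection of `x₀` onto the box `X`. Then `(xs - x₀, xs, xs - x₀)` is a saddle
point of the augmented Lagrangian, and the optimality conditions of the `x`-update and of the
projection give `⟪yᵏ⁺¹ - (xs - x₀), xᵏ⁺¹ - xs⟫ ≤ 0`. With this, the Lyapunov function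
`ρ⁻¹ ‖yᵏ - (xs - x₀)‖² + ρ ‖xᵏ - xs‖²` decreases at every step by at least
`2 ‖uᵏ⁺¹ - (xs - x₀)‖² + ρ ‖(uᵏ⁺¹ - (xs - x₀)) - (xᵏ - xs)‖²`. These decrements are summable,
so all three sequences converge to the saddle point, and their successive differences vanish.
-/

open scoped InnerProductSpace

/-- The augmented Lagrangian
`L_ρ(u, x, y) = (1/2)‖u‖₂² + Re(yᴴ(x − x₀ − u)) + (ρ/2)‖x − x₀ − u‖₂²`. -/
noncomputable def augLag {n : ℕ} (ρ : ℝ) (x₀ u x y : EuclideanSpace ℂ (Fin n)) : ℝ :=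
  (1/2) * ‖u‖^2 + (⟪y, x - x₀ - u⟫_ℂ).re + (ρ/2) * ‖x - x₀ - u‖^2

open scoped RealInnerProductSpace
open Filter Topology

lemma nonneg_of_forall_pos_le_one_add_mul {a b : ℝ}
    (h : ∀ t : ℝ, 0 < t → t ≤ 1 → 0 ≤ a + t * b) : 0 ≤ a := by
  have hlim : Tendsto (fun t => a + t * b) (𝓝[>] 0) (𝓝 a) :=
    ((show Continuous fun t : ℝ => a + t * b by fun_prop).tendsto' 0 a (by simp)).mono_left
      nhdsWithin_le_nhds
  refine ge_of_tendsto hlim ?_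
  filter_upwards [Ioo_mem_nhdsGT one_pos] with t ht using h t ht.1 ht.2.le

lemma tendsto_zero_of_add_le {V D : ℕ → ℝ} (hV : ∀ k, 0 ≤ V k) (hD : ∀ k, 0 ≤ D k)
    (h : ∀ k, V (k + 1) + D k ≤ V k) : Tendsto D atTop (𝓝 0) := by
  have hsum : ∀ N, ∑ k ∈ Finset.range N, D k + V N ≤ V 0 := by
    intro N
    induction N with
    | zero => simp
    | succ N ih => rw [Finset.sum_range_succ]; linarith [h N]
  exact (summable_of_sum_range_le hD fun N => by linarith [hsum N, hV N]).tendsto_atTop_zero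

section Normed

variable {E : Type*} [SeminormedAddCommGroup E]

lemma tendsto_zero_of_tendsto_norm_sq {ι : Type*} {l : Filter ι} {f : ι → E}
    (h : Tendsto (fun k => ‖f k‖ ^ 2) l (𝓝 0)) : Tendsto f l (𝓝 0) := by
  rw [tendsto_zero_iff_norm_tendsto_zero]
  simpa [Real.sqrt_sq (norm_nonneg _)] using h.sqrt

lemma tendsto_norm_sub_succ_sq_of_tendsto {f : ℕ → E} {a : E} (hf : Tendsto f atTop (𝓝 a)) :
    Tendsto (fun k => ‖f k - f (k + 1)‖ ^ 2) atTop (𝓝 0) := by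
  simpa using (hf.sub (hf.comp (tendsto_add_atTop_nat 1))).norm.pow 2

end Normed

section PiLp

variable {p : ENNReal} {ι : Type*} {F : ι → Type*} [∀ i, SeminormedAddCommGroup (F i)]

lemma PiLp.convex_setOf_forall_norm_apply_le [∀ i, NormedSpace ℝ (F i)] (β : ℝ) :
    Convex ℝ {z : PiLp p F | ∀ i, ‖z i‖ ≤ β} := by
  rw [Set.ofPred_forall]
  refine convex_iInter fun i => ?_
  have hpre : {z : PiLp p F | ‖z i‖ ≤ β}
      = PiLp.projₗ p (𝕜 := ℝ) F i ⁻¹' Metric.closedBall 0 β := by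
    ext z; simp
  rw [hpre]
  exact (convex_closedBall 0 β).linear_preimage _

lemma PiLp.isClosed_setOf_forall_norm_apply_le [Fact (1 ≤ p)] (β : ℝ) :
    IsClosed {z : PiLp p F | ∀ i, ‖z i‖ ≤ β} := by
  rw [Set.ofPred_forall]
  exact isClosed_iInter fun i =>
    isClosed_le (continuous_norm.comp (PiLp.continuous_apply p F i)) continuous_const

end PiLp

section RealInnerProductSpace

variable {E : Type*} [NormedAddCommGroup E] [InnerProductSpace ℝ E]

lemma Convex.inner_nonneg_of_isMinOn_of_sub_eq {S : Set E} (hS : Convex ℝ S) {f : E → ℝ}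
    {w g : E} {c : ℝ} (hw : w ∈ S) (hmin : IsMinOn f S w)
    (hf : ∀ z, f z - f w = ⟪g, z - w⟫ + c * ‖z - w‖ ^ 2) {z : E} (hz : z ∈ S) :
    0 ≤ ⟪g, z - w⟫ := by
  refine nonneg_of_forall_pos_le_one_add_mul (b := c * ‖z - w‖ ^ 2) fun t ht0 ht1 => ?_
  have hmem := hS.add_smul_sub_mem hw hz ⟨ht0.le, ht1⟩
  have hdiff := hf (w + t • (z - w))
  rw [add_sub_cancel_left, real_inner_smul_right, norm_smul, Real.norm_of_nonneg ht0.le] at hdiff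
  have : 0 ≤ t * (⟪g, z - w⟫ + t * (c * ‖z - w‖ ^ 2)) := by
    nlinarith [isMinOn_iff.mp hmin _ hmem]
  exact nonneg_of_mul_nonneg_right this ht0

end RealInnerProductSpace

namespace TADMM

lemma y_update_eq {E : Type*} [AddCommGroup E] [Module ℝ E] {ρ : ℝ} (hρ : 0 < ρ)
    {x₀ x x' y y' u' : E} (hu : u' = (ρ / (ρ + 1)) • (x - x₀ + ρ⁻¹ • y))
    (hy : y' = y + ρ • (x' - x₀ - u')) : y' = u' + ρ • (x' - x) := by
  have hy_eq : y = (ρ + 1) • u' - ρ • (x - x₀) := by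
    rw [hu, smul_smul, mul_div_cancel₀ _ (by positivity : ρ + 1 ≠ 0), smul_add, smul_smul,
      mul_inv_cancel₀ hρ.ne', one_smul]
    abel
  rw [hy, hy_eq]
  module

section Energy

variable {E : Type*} [NormedAddCommGroup E] {ρ : ℝ} {x₀ xs : E}

noncomputable def energy (ρ : ℝ) (x₀ xs x y : E) : ℝ :=
  ρ⁻¹ * ‖y - (xs - x₀)‖ ^ 2 + ρ * ‖x - xs‖ ^ 2

lemma energy_nonneg (hρ : 0 < ρ) (x y : E) : 0 ≤ energy ρ x₀ xs x y := by
  unfold energy; positivity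

variable [InnerProductSpace ℝ E]

-- `U, P, P₀, Y, Y₀` stand for the deviations of `uᵏ⁺¹, xᵏ⁺¹, xᵏ, yᵏ⁺¹, yᵏ` from the saddle point;
-- the two hypotheses are the multiplier update in its two forms.
lemma energy_identity (hρ : ρ ≠ 0) {U P P₀ Y Y₀ : E} (hY : Y = U + ρ • (P - P₀))
    (hY₀ : Y₀ = Y - ρ • (P - U)) :
    ρ⁻¹ * ‖Y‖ ^ 2 + ρ * ‖P‖ ^ 2 + (2 * ‖U‖ ^ 2 + ρ * ‖U - P₀‖ ^ 2)
      = ρ⁻¹ * ‖Y₀‖ ^ 2 + ρ * ‖P₀‖ ^ 2 + 2 * ⟪Y, P⟫ := by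
  subst hY₀ hY
  simp only [← real_inner_self_eq_norm_sq, inner_add_left, inner_add_right, inner_sub_left,
    inner_sub_right, real_inner_smul_left, real_inner_smul_right, real_inner_comm P U,
    real_inner_comm P₀ U, real_inner_comm P₀ P]
  field_simp
  ring

variable {X : Set E} {u x y : ℕ → E}
  (hyu : ∀ k, y (k + 1) = u (k + 1) + ρ • (x (k + 1) - x k))
  (hy : ∀ k, y (k + 1) = y k + ρ • (x (k + 1) - x₀ - u (k + 1)))
  (hx : ∀ k, x (k + 1) ∈ X) (hvi : ∀ k, ∀ z ∈ X, 0 ≤ ⟪y (k + 1), z - x (k + 1)⟫)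
  (hxs : xs ∈ X) (hproj : ∀ z ∈ X, ⟪x₀ - xs, z - xs⟫ ≤ 0)
include hyu hy hx hvi hxs hproj

lemma energy_succ_add_le (hρ : 0 < ρ) (k : ℕ) :
    energy ρ x₀ xs (x (k + 1)) (y (k + 1))
        + (2 * ‖u (k + 1) - (xs - x₀)‖ ^ 2 + ρ * ‖u (k + 1) - (xs - x₀) - (x k - xs)‖ ^ 2)
      ≤ energy ρ x₀ xs (x k) (y k) := by
  have hsplit : ⟪y (k + 1) - (xs - x₀), x (k + 1) - xs⟫
      = -⟪y (k + 1), xs - x (k + 1)⟫ + ⟪x₀ - xs, x (k + 1) - xs⟫ := by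
    rw [← inner_neg_right, neg_sub, ← inner_add_left]
    congr 1; abel
  have hcross : ⟪y (k + 1) - (xs - x₀), x (k + 1) - xs⟫ ≤ 0 := by
    linarith [hvi k xs hxs, hproj _ (hx k)]
  have hid := energy_identity (U := u (k + 1) - (xs - x₀)) (P := x (k + 1) - xs)
    (P₀ := x k - xs) (Y := y (k + 1) - (xs - x₀)) (Y₀ := y k - (xs - x₀)) hρ.ne'
    (by rw [hyu k]; module) (by rw [hy k]; module)
  unfold energy
  linarith

theorem tendsto_saddle (hρ : 0 < ρ) :
    Tendsto u atTop (𝓝 (xs - x₀)) ∧ Tendsto x atTop (𝓝 xs) ∧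
      Tendsto y atTop (𝓝 (xs - x₀)) := by
  have hdrop := tendsto_zero_of_add_le (fun k => energy_nonneg hρ (x k) (y k))
    (fun k => by positivity) (energy_succ_add_le hyu hy hx hvi hxs hproj hρ)
  have hdrop₂ := hdrop.div_const 2
  have hdropρ := hdrop.div_const ρ
  rw [zero_div] at hdrop₂ hdropρ
  have hu : Tendsto (fun k => u (k + 1) - (xs - x₀)) atTop (𝓝 0) :=
    tendsto_zero_of_tendsto_norm_sq <| squeeze_zero (fun k => by positivity)
      (fun k => by rw [le_div_iff₀ two_pos]; nlinarith) hdrop₂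
  have hgap : Tendsto (fun k => u (k + 1) - (xs - x₀) - (x k - xs)) atTop (𝓝 0) :=
    tendsto_zero_of_tendsto_norm_sq <| squeeze_zero (fun k => by positivity)
      (fun k => by rw [le_div_iff₀ hρ]; nlinarith) hdropρ
  have hx : Tendsto x atTop (𝓝 xs) := by
    rw [← tendsto_sub_nhds_zero_iff]
    simpa using hu.sub hgap
  have hu' : Tendsto u atTop (𝓝 (xs - x₀)) :=
    (tendsto_add_atTop_iff_nat 1).mp (tendsto_sub_nhds_zero_iff.mp hu)
  refine ⟨hu', hx, (tendsto_add_atTop_iff_nat 1).mp ?_⟩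
  simp_rw [hyu]
  simpa using (hu'.comp (tendsto_add_atTop_nat 1)).add
    (((hx.comp (tendsto_add_atTop_nat 1)).sub hx).const_smul ρ)

end Energy

end TADMM

lemma EuclideanSpace.re_inner_eq_real_inner {ι : Type*} [Fintype ι] (a b : EuclideanSpace ℂ ι) :
    (⟪a, b⟫_ℂ).re = ⟪a, b⟫ := by
  simp [PiLp.inner_apply, Complex.re_sum]

lemma augLag_sub_augLag {n : ℕ} (ρ : ℝ) (x₀ u z w y : EuclideanSpace ℂ (Fin n)) :
    augLag ρ x₀ u z y - augLag ρ x₀ u w y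
      = ⟪y + ρ • (w - x₀ - u), z - w⟫ + ρ / 2 * ‖z - w‖ ^ 2 := by
  have hsplit : z - x₀ - u = (z - w) + (w - x₀ - u) := by abel
  unfold augLag
  rw [EuclideanSpace.re_inner_eq_real_inner, EuclideanSpace.re_inner_eq_real_inner, hsplit,
    norm_add_sq_real, inner_add_right, inner_add_left, real_inner_smul_left,
    real_inner_comm (z - w) (w - x₀ - u)]
  ring

theorem stmt_11_general (ρ : ℝ) (hρ : 0 < ρ)
    {n : ℕ} (x₀ : EuclideanSpace ℂ (Fin n)) (β : ℝ)
    (u x y : ℕ → EuclideanSpace ℂ (Fin n))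
    -- `u`-update: the unique minimizer of `u ↦ L_ρ(u, xᵏ, yᵏ)`
    (hu : ∀ k, 1 ≤ k → u (k+1) = (ρ/(ρ+1)) • (x k - x₀ + ρ⁻¹ • y k))
    -- `x`-update: a minimizer of `x ↦ L_ρ(uᵏ⁺¹, x, yᵏ)` over `X = {x : maxᵢ |xᵢ| ≤ β}`
    (hxfeas : ∀ k, 1 ≤ k → ∀ i, ‖x (k+1) i‖ ≤ β)
    (hxmin : ∀ k, 1 ≤ k → ∀ z : EuclideanSpace ℂ (Fin n), (∀ i, ‖z i‖ ≤ β) →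
      augLag ρ x₀ (u (k+1)) (x (k+1)) (y k) ≤ augLag ρ x₀ (u (k+1)) z (y k))
    -- multiplier update
    (hy : ∀ k, 1 ≤ k → y (k+1) = y k + ρ • (x (k+1) - x₀ - u (k+1))) :
    Filter.Tendsto (fun k => ‖u k - u (k+1)‖^2) Filter.atTop (nhds 0) ∧
    Filter.Tendsto (fun k => ‖x k - x (k+1)‖^2) Filter.atTop (nhds 0) ∧
    Filter.Tendsto (fun k => ‖y k - y (k+1)‖^2) Filter.atTop (nhds 0) := by
  set X : Set (EuclideanSpace ℂ (Fin n)) := {z | ∀ i, ‖z i‖ ≤ β}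
  have hX : Convex ℝ X := PiLp.convex_setOf_forall_norm_apply_le β
  obtain ⟨xs, hxs, hproj⟩ : ∃ xs ∈ X, ∀ z ∈ X, ⟪x₀ - xs, z - xs⟫ ≤ 0 := by
    obtain ⟨xs, hxs, hmin⟩ := exists_norm_eq_iInf_of_complete_convex (K := X) ⟨x 2, hxfeas 1 le_rfl⟩
      (PiLp.isClosed_setOf_forall_norm_apply_le β).isComplete hX x₀
    exact ⟨xs, hxs, (norm_eq_iInf_iff_real_inner_le_zero hX hxs).mp hmin⟩
  have hvi : ∀ k, 1 ≤ k → ∀ z ∈ X, 0 ≤ ⟪y (k + 1), z - x (k + 1)⟫ := fun k hk z hz => by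
    rw [hy k hk]
    exact hX.inner_nonneg_of_isMinOn_of_sub_eq (f := fun z => augLag ρ x₀ (u (k + 1)) z (y k))
      (hxfeas k hk) (isMinOn_iff.mpr (hxmin k hk)) (fun z => augLag_sub_augLag ..) hz
  obtain ⟨hu', hx', hy'⟩ := TADMM.tendsto_saddle (X := X) (u := fun k => u (k + 1))
    (x := fun k => x (k + 1)) (y := fun k => y (k + 1))
    (fun k => TADMM.y_update_eq hρ (hu (k + 1) le_add_self) (hy (k + 1) le_add_self))
    (fun k => hy (k + 1) le_add_self) (fun k => hxfeas (k + 1) le_add_self)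
    (fun k => hvi (k + 1) le_add_self) hxs hproj hρ
  exact ⟨tendsto_norm_sub_succ_sq_of_tendsto ((tendsto_add_atTop_iff_nat 1).mp hu'),
    tendsto_norm_sub_succ_sq_of_tendsto ((tendsto_add_atTop_iff_nat 1).mp hx'),
    tendsto_norm_sub_succ_sq_of_tendsto ((tendsto_add_atTop_iff_nat 1).mp hy')⟩

theorem stmt_11 (ρ : ℝ) (hρ : 0 < ρ)
    {n : ℕ} (x₀ : EuclideanSpace ℂ (Fin n)) (β : ℝ) (hβ : 0 < β)
    (u x y : ℕ → EuclideanSpace ℂ (Fin n))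
    -- `u`-update: the unique minimizer of `u ↦ L_ρ(u, xᵏ, yᵏ)`
    (hu : ∀ k, 1 ≤ k → u (k+1) = (ρ/(ρ+1)) • (x k - x₀ + ρ⁻¹ • y k))
    -- `x`-update: a minimizer of `x ↦ L_ρ(uᵏ⁺¹, x, yᵏ)` over `X = {x : maxᵢ |xᵢ| ≤ β}`
    (hxfeas : ∀ k, 1 ≤ k → ∀ i, ‖x (k+1) i‖ ≤ β)
    (hxmin : ∀ k, 1 ≤ k → ∀ z : EuclideanSpace ℂ (Fin n), (∀ i, ‖z i‖ ≤ β) →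
      augLag ρ x₀ (u (k+1)) (x (k+1)) (y k) ≤ augLag ρ x₀ (u (k+1)) z (y k))
    -- multiplier update
    (hy : ∀ k, 1 ≤ k → y (k+1) = y k + ρ • (x (k+1) - x₀ - u (k+1)))
    (hρ2 : 2 ≤ ρ) :
    Filter.Tendsto (fun k => ‖u k - u (k+1)‖^2) Filter.atTop (nhds 0) ∧
    Filter.Tendsto (fun k => ‖x k - x (k+1)‖^2) Filter.atTop (nhds 0) ∧
    Filter.Tendsto (fun k => ‖y k - y (k+1)‖^2) Filter.atTop (nhds 0) :=
  stmt_11_general ρ hρ x₀ β u x y hu hxfeas hxmin hy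
end

section
/- (Theorem 1) Let (u^k, x^k, y^k), k ≥ 1, be the sequence generated by the T-ADMM algorithm. If the penalty parameter satisfies ρ ≥ 2, then there exist u*, x*, y* ∈ ℂⁿ such that u^{k+1} → u*, x^{k+1} → x*, and y^{k+1} → y* as k → ∞, and moreover x^{k+1} − x₀ − u^{k+1} → 0 as k → ∞. -/
/-!
The `x`-update is the metric projection of `x₀ + uᵏ⁺¹ - yᵏ/ρ` onto the convex box `X`, and
projections onto a convex set are nonexpansive. Eliminating `y`, the centres `cₖ = uᵏ⁺¹ - yᵏ/ρ`
obey `cₖ₊₁ = cₖ/(ρ+1) + (ρ-1)/(ρ+1) • (xᵏ⁺¹ - x₀)`, so for `ρ ≥ 1` consecutive differences of `c`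
(which dominate those of `x`) shrink by the factor `ρ/(ρ+1) < 1`. Thus `c` and `x` are Cauchy,
`yᵏ⁺¹ = ρ (xᵏ⁺¹ - x₀ - cₖ)` and `uᵏ⁺¹ = cₖ + yᵏ/ρ` converge with them, and the limits satisfy
`x* - x₀ - u* = 0`.
-/

open scoped InnerProductSpace

open Filter Topology

section Projection

variable {F : Type*} [NormedAddCommGroup F] [InnerProductSpace ℝ F] {K : Set F}
  {w w' p p' : F}

theorem real_inner_sub_sub_nonpos_of_isMinOn (hK : Convex ℝ K) (hp : p ∈ K)
    (hmin : IsMinOn (‖· - w‖) K p) {z : F} (hz : z ∈ K) : ⟪w - p, z - p⟫_ℝ ≤ 0 := by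
  refine (norm_eq_iInf_iff_real_inner_le_zero hK hp).1 ?_ z hz
  simp only [norm_sub_rev w]
  exact (hmin.iInf_eq hp).symm

theorem Convex.norm_sub_le_of_isMinOn (hK : Convex ℝ K) (hp : p ∈ K) (hp' : p' ∈ K)
    (hmin : IsMinOn (‖· - w‖) K p) (hmin' : IsMinOn (‖· - w'‖) K p') :
    ‖p - p'‖ ≤ ‖w - w'‖ := by
  have h := real_inner_sub_sub_nonpos_of_isMinOn hK hp hmin hp'
  have h' := real_inner_sub_sub_nonpos_of_isMinOn hK hp' hmin' hp
  have key : ‖p - p'‖ ^ 2 ≤ ‖w - w'‖ * ‖p - p'‖ := calc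
    ‖p - p'‖ ^ 2 ≤ ⟪w - w', p - p'⟫_ℝ := by
      rw [← neg_sub p p', inner_neg_right] at h
      have e : w - w' = (p - p') + (w - p) - (w' - p') := by abel
      rw [e, inner_sub_left, inner_add_left, real_inner_self_eq_norm_sq]
      linarith
    _ ≤ ‖w - w'‖ * ‖p - p'‖ := real_inner_le_norm _ _
  nlinarith [norm_nonneg (p - p'), norm_nonneg (w - w')]

end Projection

theorem le_mul_pow_of_succ_le_mul {f : ℕ → ℝ} {q : ℝ} (hq : 0 ≤ q)
    (h : ∀ m, f (m + 1) ≤ q * f m) (m : ℕ) : f m ≤ f 0 * q ^ m := by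
  induction m with
  | zero => simp
  | succ m ih => calc
      f (m + 1) ≤ q * f m := h m
      _ ≤ q * (f 0 * q ^ m) := by gcongr
      _ = f 0 * q ^ (m + 1) := by ring

theorem cauchySeq_of_succ_eq_smul_add_smul {F : Type*} [NormedAddCommGroup F] [NormedSpace ℝ F]
    {a b : ℝ} (ha : 0 ≤ a) (hb : 0 ≤ b) (hab : a + b < 1) {c x : ℕ → F} {x₀ : F}
    (hrec : ∀ m, c (m + 1) = a • c m + b • (x m - x₀))
    (hx : ∀ m, ‖x m - x (m + 1)‖ ≤ ‖c m - c (m + 1)‖) :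
    CauchySeq c ∧ CauchySeq x := by
  have hstep : ∀ m, ‖c (m + 1) - c (m + 2)‖ ≤ (a + b) * ‖c m - c (m + 1)‖ := fun m => calc
    ‖c (m + 1) - c (m + 2)‖ = ‖a • (c m - c (m + 1)) + b • (x m - x (m + 1))‖ := by
      rw [hrec (m + 1), hrec m]; congr 1; module
    _ ≤ a * ‖c m - c (m + 1)‖ + b * ‖x m - x (m + 1)‖ := by
      refine (norm_add_le _ _).trans ?_
      rw [norm_smul_of_nonneg ha, norm_smul_of_nonneg hb]
    _ ≤ (a + b) * ‖c m - c (m + 1)‖ := by rw [add_mul]; gcongr; exact hx m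
  have hgeom := le_mul_pow_of_succ_le_mul (f := fun m => ‖c m - c (m + 1)‖)
    (by positivity) hstep
  refine ⟨cauchySeq_of_le_geometric (a + b) ‖c 0 - c 1‖ hab fun m => ?_,
    cauchySeq_of_le_geometric (a + b) ‖c 0 - c 1‖ hab fun m => ?_⟩
  · simpa only [dist_eq_norm] using hgeom m
  · simpa only [dist_eq_norm] using (hx m).trans (hgeom m)

theorem convex_setOf_forall_norm_apply_le {𝕜 ι : Type*} [RCLike 𝕜] (β : ℝ) :
    Convex ℝ {z : EuclideanSpace 𝕜 ι | ∀ i, ‖z i‖ ≤ β} := by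
  intro z hz z' hz' s t hs ht hst i
  calc ‖(s • z + t • z') i‖ ≤ s * ‖z i‖ + t * ‖z' i‖ := by
        simp only [PiLp.add_apply, PiLp.smul_apply]
        refine (norm_add_le _ _).trans ?_
        rw [norm_smul_of_nonneg hs, norm_smul_of_nonneg ht]
    _ ≤ s * β + t * β := by gcongr <;> simp_all
    _ = β := by rw [← add_mul, hst, one_mul]

theorem augLag_eq_norm_sub_sq_add {n : ℕ} {ρ : ℝ} (hρ : ρ ≠ 0)
    (x₀ u z y : EuclideanSpace ℂ (Fin n)) :
    augLag ρ x₀ u z y =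
      ρ / 2 * ‖z - (x₀ + u - ρ⁻¹ • y)‖ ^ 2 + (‖u‖ ^ 2 / 2 - ‖y‖ ^ 2 / (2 * ρ)) := by
  have hsplit : z - (x₀ + u - ρ⁻¹ • y) = (z - x₀ - u) + ρ⁻¹ • y := by abel
  rw [augLag, hsplit, norm_add_sq (𝕜 := ℂ), norm_smul, Real.norm_eq_abs,
    RCLike.real_smul_eq_coe_smul (K := ℂ), inner_smul_right, RCLike.re_ofReal_mul, inner_re_symm]
  simp only [RCLike.re_to_complex, mul_pow, sq_abs]
  field_simp
  ring

theorem isMinOn_norm_sub_of_isMinOn_augLag {n : ℕ} {ρ : ℝ} (hρ : 0 < ρ)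
    {K : Set (EuclideanSpace ℂ (Fin n))} {x₀ u y p : EuclideanSpace ℂ (Fin n)}
    (hmin : IsMinOn (augLag ρ x₀ u · y) K p) :
    IsMinOn (‖· - (x₀ + u - ρ⁻¹ • y)‖) K p := by
  refine isMinOn_iff.2 fun z hz => ?_
  have h := isMinOn_iff.1 hmin z hz
  simp only [augLag_eq_norm_sub_sq_add hρ.ne'] at h
  have hsq : ‖p - (x₀ + u - ρ⁻¹ • y)‖ ^ 2 ≤ ‖z - (x₀ + u - ρ⁻¹ • y)‖ ^ 2 :=
    le_of_mul_le_mul_left ((add_le_add_iff_right _).1 h) (by positivity)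
  exact (pow_le_pow_iff_left₀ (norm_nonneg _) (norm_nonneg _) two_ne_zero).1 hsq

section Iterates

variable {E : Type*} [AddCommGroup E] [Module ℝ E] {ρ : ℝ} {x₀ x u u' y y' : E}

theorem tadmm_multiplier_eq (hρ : ρ ≠ 0) (hy' : y' = y + ρ • (x - x₀ - u)) :
    y' = ρ • (x - x₀ - (u - ρ⁻¹ • y)) := by
  rw [hy']
  match_scalars <;> field_simp

theorem tadmm_center_succ (hρ : 0 < ρ) (hu' : u' = (ρ / (ρ + 1)) • (x - x₀ + ρ⁻¹ • y'))
    (hy' : y' = y + ρ • (x - x₀ - u)) :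
    u' - ρ⁻¹ • y' = (ρ + 1)⁻¹ • (u - ρ⁻¹ • y) + ((ρ - 1) / (ρ + 1)) • (x - x₀) := by
  have : ρ + 1 ≠ 0 := by positivity
  subst hu' hy'
  match_scalars <;> field_simp <;> ring

end Iterates

theorem tadmm_tendsto_of_tendsto {E : Type*} [AddCommGroup E] [TopologicalSpace E]
    [IsTopologicalAddGroup E] [Module ℝ E] [ContinuousConstSMul ℝ E] {ρ : ℝ} (hρ : ρ ≠ 0)
    {x₀ : E} {u x y : ℕ → E}
    (hy : ∀ k, 1 ≤ k → y (k+1) = y k + ρ • (x (k+1) - x₀ - u (k+1)))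
    {cs xs : E} (hc : Tendsto (fun m => u (m + 2) - ρ⁻¹ • y (m + 1)) atTop (𝓝 cs))
    (hx : Tendsto (fun m => x (m + 2)) atTop (𝓝 xs)) :
    ∃ ustar xstar ystar : E,
      Tendsto (fun k => u (k+1)) atTop (𝓝 ustar) ∧
      Tendsto (fun k => x (k+1)) atTop (𝓝 xstar) ∧
      Tendsto (fun k => y (k+1)) atTop (𝓝 ystar) ∧
      Tendsto (fun k => x (k+1) - x₀ - u (k+1)) atTop (𝓝 0) := by
  set ys := ρ • (xs - x₀ - cs)
  have hy2 : Tendsto (fun m => y (m + 2)) atTop (𝓝 ys) :=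
    (((hx.sub_const x₀).sub hc).const_smul ρ).congr fun m =>
      (tadmm_multiplier_eq hρ (hy (m + 1) (by omega))).symm
  have hy1 : Tendsto (fun k => y (k + 1)) atTop (𝓝 ys) := (tendsto_add_atTop_iff_nat 1).1 hy2
  have hu2 : Tendsto (fun m => u (m + 2)) atTop (𝓝 (cs + ρ⁻¹ • ys)) :=
    (hc.add (hy1.const_smul ρ⁻¹)).congr fun m => sub_add_cancel _ _
  have hu1 := (tendsto_add_atTop_iff_nat (f := fun k => u (k + 1)) 1).1 hu2
  have hx1 := (tendsto_add_atTop_iff_nat (f := fun k => x (k + 1)) 1).1 hx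
  refine ⟨_, _, _, hu1, hx1, hy1, ?_⟩
  convert (hx1.sub_const x₀).sub hu1 using 2
  rw [inv_smul_smul₀ hρ]
  abel

theorem stmt_13_general (ρ : ℝ)
    {n : ℕ} (x₀ : EuclideanSpace ℂ (Fin n)) (β : ℝ)
    (u x y : ℕ → EuclideanSpace ℂ (Fin n))
    -- `u`-update: the unique minimizer of `u ↦ L_ρ(u, xᵏ, yᵏ)`
    (hu : ∀ k, 1 ≤ k → u (k+1) = (ρ/(ρ+1)) • (x k - x₀ + ρ⁻¹ • y k))
    -- `x`-update: a minimizer of `x ↦ L_ρ(uᵏ⁺¹, x, yᵏ)` over `X = {x : maxᵢ |xᵢ| ≤ β}`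
    (hxfeas : ∀ k, 1 ≤ k → ∀ i, ‖x (k+1) i‖ ≤ β)
    (hxmin : ∀ k, 1 ≤ k → ∀ z : EuclideanSpace ℂ (Fin n), (∀ i, ‖z i‖ ≤ β) →
      augLag ρ x₀ (u (k+1)) (x (k+1)) (y k) ≤ augLag ρ x₀ (u (k+1)) z (y k))
    -- multiplier update
    (hy : ∀ k, 1 ≤ k → y (k+1) = y k + ρ • (x (k+1) - x₀ - u (k+1)))
    (hρ2 : 2 ≤ ρ) :
    ∃ ustar xstar ystar : EuclideanSpace ℂ (Fin n),
      Filter.Tendsto (fun k => u (k+1)) Filter.atTop (nhds ustar) ∧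
      Filter.Tendsto (fun k => x (k+1)) Filter.atTop (nhds xstar) ∧
      Filter.Tendsto (fun k => y (k+1)) Filter.atTop (nhds ystar) ∧
      Filter.Tendsto (fun k => x (k+1) - x₀ - u (k+1)) Filter.atTop (nhds 0) := by
  have hρ : 0 < ρ := by linarith
  set c : ℕ → EuclideanSpace ℂ (Fin n) := fun m => u (m + 2) - ρ⁻¹ • y (m + 1)
  set X : Set (EuclideanSpace ℂ (Fin n)) := {z | ∀ i, ‖z i‖ ≤ β}
  have hX : Convex ℝ X := convex_setOf_forall_norm_apply_le β
  have hmin (m : ℕ) : IsMinOn (‖· - (x₀ + c m)‖) X (x (m + 2)) := by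
    have h := isMinOn_norm_sub_of_isMinOn_augLag hρ (K := X)
      (isMinOn_iff.2 (hxmin (m + 1) (by omega)))
    rwa [add_sub_assoc] at h
  have hnonexp (m : ℕ) : ‖x (m + 2) - x (m + 3)‖ ≤ ‖c m - c (m + 1)‖ := by
    refine (hX.norm_sub_le_of_isMinOn (hxfeas (m + 1) (by omega)) (hxfeas (m + 2) (by omega))
      (hmin m) (hmin (m + 1))).trans_eq ?_
    rw [add_sub_add_left_eq_sub]
  have hrec (m : ℕ) : c (m + 1) = (ρ + 1)⁻¹ • c m + ((ρ - 1) / (ρ + 1)) • (x (m + 2) - x₀) :=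
    tadmm_center_succ hρ (hu (m + 2) (by omega)) (hy (m + 1) (by omega))
  obtain ⟨hcC, hxC⟩ := cauchySeq_of_succ_eq_smul_add_smul (by positivity)
    (div_nonneg (by linarith) (by positivity)) (by field_simp; linarith) hrec hnonexp
  obtain ⟨cs, hcs⟩ := cauchySeq_tendsto_of_complete hcC
  obtain ⟨xs, hxs⟩ := cauchySeq_tendsto_of_complete hxC
  exact tadmm_tendsto_of_tendsto hρ.ne' hy hcs hxs

/-- Theorem 1 of the paper: convergence of T-ADMM when `ρ ≥ 2`. -/
theorem stmt_13 (ρ : ℝ) (hρ : 0 < ρ)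
    {n : ℕ} (x₀ : EuclideanSpace ℂ (Fin n)) (β : ℝ) (hβ : 0 < β)
    (u x y : ℕ → EuclideanSpace ℂ (Fin n))
    -- `u`-update: the unique minimizer of `u ↦ L_ρ(u, xᵏ, yᵏ)`
    (hu : ∀ k, 1 ≤ k → u (k+1) = (ρ/(ρ+1)) • (x k - x₀ + ρ⁻¹ • y k))
    -- `x`-update: a minimizer of `x ↦ L_ρ(uᵏ⁺¹, x, yᵏ)` over `X = {x : maxᵢ |xᵢ| ≤ β}`
    (hxfeas : ∀ k, 1 ≤ k → ∀ i, ‖x (k+1) i‖ ≤ β)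
    (hxmin : ∀ k, 1 ≤ k → ∀ z : EuclideanSpace ℂ (Fin n), (∀ i, ‖z i‖ ≤ β) →
      augLag ρ x₀ (u (k+1)) (x (k+1)) (y k) ≤ augLag ρ x₀ (u (k+1)) z (y k))
    -- multiplier update
    (hy : ∀ k, 1 ≤ k → y (k+1) = y k + ρ • (x (k+1) - x₀ - u (k+1)))
    (hρ2 : 2 ≤ ρ) :
    ∃ ustar xstar ystar : EuclideanSpace ℂ (Fin n),
      Filter.Tendsto (fun k => u (k+1)) Filter.atTop (nhds ustar) ∧
      Filter.Tendsto (fun k => x (k+1)) Filter.atTop (nhds xstar) ∧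
      Filter.Tendsto (fun k => y (k+1)) Filter.atTop (nhds ystar) ∧
      Filter.Tendsto (fun k => x (k+1) - x₀ - u (k+1)) Filter.atTop (nhds 0) :=
  stmt_13_general ρ x₀ β u x y hu hxfeas hxmin hy hρ2
end
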